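/- arXiv:1305.5569 — 4 statements merged into one kernel-verified Lean document; each statement's English description precedes it below -/
import Mathlib

section
/- Positions i and j of a permutation τ satisfy τ − {i} = τ − {j} (i.e., deleting the letter in position i and flattening gives the same permutation as deleting the letter in position j and flattening) if and only if i and j are positions in the same run of τ. -/
open scoped Classical

/-- The set of all (finite) permutations, as patterns: a permutation of length `n`
together with its length. -/
abbrev PermPt := Σ n : ℕ, Equiv.Perm (Fin n)

/-- Pattern containment order: `σ` occurs in `τ` if there is a strictly monotone
choice of positions on which `τ` is order-isomorphic to `σ`. -/
def ple (σ τ : PermPt) : Prop :=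
  ∃ f : Fin σ.1 → Fin τ.1, StrictMono f ∧
    ∀ a b : Fin σ.1, σ.2 a ≤ σ.2 b ↔ τ.2 (f a) ≤ τ.2 (f b)

/-- Strict pattern containment. -/
def plt (σ τ : PermPt) : Prop := ple σ τ ∧ ¬ ple τ σ

/-- Direct sum of permutations. -/
def pds {m n : ℕ} (α : Equiv.Perm (Fin m)) (β : Equiv.Perm (Fin n)) :
    Equiv.Perm (Fin (m + n)) :=
  finSumFinEquiv.symm.trans ((Equiv.sumCongr α β).trans finSumFinEquiv)

/-- Skew sum of permutations. -/
def pss {m n : ℕ} (α : Equiv.Perm (Fin m)) (β : Equiv.Perm (Fin n)) :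
    Equiv.Perm (Fin (m + n)) :=
  finSumFinEquiv.symm.trans
    (((Equiv.sumCongr α β).trans (Equiv.sumComm (Fin m) (Fin n))).trans
      (finSumFinEquiv.trans (finCongr (Nat.add_comm n m))))

/-- Direct sum, as an operation on `PermPt`. -/
def pdsP (a b : PermPt) : PermPt := ⟨a.1 + b.1, pds a.2 b.2⟩

/-- Skew sum, as an operation on `PermPt`. -/
def pssP (a b : PermPt) : PermPt := ⟨a.1 + b.1, pss a.2 b.2⟩

/-- The empty permutation. -/
def pempty : PermPt := ⟨0, 1⟩

/-- The permutation `1` of length one. -/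
def pone : PermPt := ⟨1, 1⟩

/-- A permutation is decomposable if it is the direct sum of two nonempty
permutations, i.e. some proper nonempty initial segment of positions is mapped
to the corresponding initial segment of values. -/
def Decomp {n : ℕ} (σ : Equiv.Perm (Fin n)) : Prop :=
  ∃ m : ℕ, 0 < m ∧ m < n ∧ ∀ i : Fin n, (i : ℕ) < m → (σ i : ℕ) < m

/-- Disconnectedness of a set of permutations under pattern containment:
it splits into two nonempty parts with no comparabilities between them. -/
def Disconn (S : Set PermPt) : Prop :=
  ∃ A B : Set PermPt, A ∪ B = S ∧ A.Nonempty ∧ B.Nonempty ∧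
    ∀ x ∈ A, ∀ y ∈ B, ¬ ple x y ∧ ¬ ple y x
/-- Deleting the letter in position `i` of `τ` and flattening. -/
def deleteAt {n : ℕ} (τ : Equiv.Perm (Fin (n + 1))) (i : Fin (n + 1)) :
    Equiv.Perm (Fin n) :=
  Equiv.removeNone (((finSuccEquiv' i).symm.trans (τ : Fin (n+1) ≃ Fin (n+1))).trans
    (finSuccEquiv' (τ i)))

/-- The positions `lo ≤ k ≤ hi` form a run of `τ`: the values on these positions
are consecutive increasing `a, a+1, …` or consecutive decreasing `a, a-1, …`. -/
def IsRunOn {n : ℕ} (τ : Equiv.Perm (Fin n)) (lo hi : Fin n) : Prop :=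
  lo ≤ hi ∧
  ((∀ k l : Fin n, lo ≤ k → k ≤ l → l ≤ hi →
      (τ l : ℕ) = (τ k : ℕ) + ((l : ℕ) - (k : ℕ))) ∨
   (∀ k l : Fin n, lo ≤ k → k ≤ l → l ≤ hi →
      (τ k : ℕ) = (τ l : ℕ) + ((l : ℕ) - (k : ℕ))))

/-- Positions `i` and `j` lie in a common run of `τ`. -/
def SameRun {n : ℕ} (τ : Equiv.Perm (Fin n)) (i j : Fin n) : Prop :=
  ∃ lo hi : Fin n, IsRunOn τ lo hi ∧ lo ≤ i ∧ i ≤ hi ∧ lo ≤ j ∧ j ≤ hi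

/-
For `i < j`, the letter of `τ − {i}` and of `τ − {j}` at an index `t` with `i ≤ t < j` is
`τ (t + 1)`, resp. `τ t`, each lowered by one if it exceeds the deleted value. So if the two
deletions agree, consecutive letters on `[i, j]` have consecutive values; as `τ` is injective the
direction cannot switch, and `[i, j]` is a run. Conversely, deleting either of two adjacent letters
with consecutive values gives the same permutation, and chaining these equalities along a run gives
`τ − {i} = τ − {j}`.
-/

theorem Fin.val_succAbove {n : ℕ} (p : Fin (n + 1)) (k : Fin n) :
    (p.succAbove k : ℕ) = if (k : ℕ) < p then (k : ℕ) else (k : ℕ) + 1 := by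
  simp only [Fin.succAbove, Fin.lt_def, Fin.val_castSucc]
  split_ifs <;> simp

theorem Nat.eq_of_forall_eq_succ {α : Type*} {g : ℕ → α} {a b : ℕ} (hab : a ≤ b)
    (h : ∀ t, a ≤ t → t < b → g t = g (t + 1)) : g a = g b := by
  induction b, hab using Nat.le_induction with
  | base => rfl
  | succ b hab ih => exact (ih fun t hat htb => h t hat (by omega)).trans (h b hab (by omega))

def IsNatRunOn (f : ℕ → ℕ) (a b : ℕ) : Prop :=
  (∀ k l, a ≤ k → k ≤ l → l ≤ b → f l = f k + (l - k)) ∨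
    (∀ k l, a ≤ k → k ≤ l → l ≤ b → f k = f l + (l - k))

namespace IsNatRunOn

variable {f : ℕ → ℕ} {a b : ℕ}

theorem step (h : IsNatRunOn f a b) {t : ℕ} (hat : a ≤ t) (htb : t < b) :
    f (t + 1) = f t + 1 ∨ f t = f (t + 1) + 1 := by
  rcases h with h | h
  · exact .inl ((h t (t + 1) hat (by omega) htb).trans (by omega))
  · exact .inr ((h t (t + 1) hat (by omega) htb).trans (by omega))

theorem of_injOn (hinj : Set.InjOn f (Set.Icc a b))
    (hstep : ∀ t, a ≤ t → t < b → f (t + 1) = f t + 1 ∨ f t = f (t + 1) + 1) :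
    IsNatRunOn f a b := by
  rcases le_or_gt b a with hba | hab
  · exact .inl fun k l hak hkl hlb => by rw [le_antisymm hkl (hlb.trans (hba.trans hak))]; simp
  -- The increment `d t = f (t + 1) - f t` is `±1`, and it cannot change sign since
  -- `f (t + 2) ≠ f t`; so `f` is affine with slope `d a`.
  set d : ℕ → ℤ := fun t => (f (t + 1) : ℤ) - f t with hd
  have hconst : ∀ t, a ≤ t → t < b → d t = d a := fun t hat htb =>
    (Nat.eq_of_forall_eq_succ hat fun s has hst => by
      have hback : f (s + 1 + 1) ≠ f s := fun h => by
        have := hinj ⟨by omega, by omega⟩ ⟨has, by omega⟩ h; omega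
      have := hstep s has (by omega)
      have := hstep (s + 1) (by omega) (by omega)
      simp only [hd]; omega).symm
  have haffine : ∀ k l, a ≤ k → k ≤ l → l ≤ b → (f l : ℤ) = f k + (l - k) * d a := by
    intro k l hak hkl hlb
    have := Nat.eq_of_forall_eq_succ (g := fun t => (f t : ℤ) - t * d a) hkl fun t hkt htl => by
      have := hconst t (by omega) (by omega)
      simp only [hd] at this ⊢; push_cast; linarith
    linarith
  rcases hstep a le_rfl hab with hup | hdown
  · have hda : d a = 1 := by simp only [hd]; omega
    exact .inl fun k l hak hkl hlb => by have := haffine k l hak hkl hlb; rw [hda] at this; omega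
  · have hda : d a = -1 := by simp only [hd]; omega
    exact .inr fun k l hak hkl hlb => by have := haffine k l hak hkl hlb; rw [hda] at this; omega

end IsNatRunOn

theorem IsRunOn.mono {m : ℕ} {τ : Equiv.Perm (Fin m)} {lo hi lo' hi' : Fin m}
    (h : IsRunOn τ lo hi) (hlo : lo ≤ lo') (hhi : hi' ≤ hi) (h' : lo' ≤ hi') :
    IsRunOn τ lo' hi' :=
  ⟨h', h.2.imp (fun h k l hk hkl hl => h k l (hlo.trans hk) hkl (hl.trans hhi))
    (fun h k l hk hkl hl => h k l (hlo.trans hk) hkl (hl.trans hhi))⟩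

theorem sameRun_comm {m : ℕ} {τ : Equiv.Perm (Fin m)} {i j : Fin m} :
    SameRun τ i j ↔ SameRun τ j i :=
  ⟨fun ⟨lo, hi, h, hi₁, hi₂, hj₁, hj₂⟩ => ⟨lo, hi, h, hj₁, hj₂, hi₁, hi₂⟩,
    fun ⟨lo, hi, h, hj₁, hj₂, hi₁, hi₂⟩ => ⟨lo, hi, h, hi₁, hi₂, hj₁, hj₂⟩⟩

theorem sameRun_iff_isRunOn {m : ℕ} {τ : Equiv.Perm (Fin m)} {i j : Fin m} (hij : i ≤ j) :
    SameRun τ i j ↔ IsRunOn τ i j :=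
  ⟨fun ⟨_, _, h, hlo, _, _, hhi⟩ => h.mono hlo hhi hij,
    fun h => ⟨i, j, h, le_rfl, hij, hij, le_rfl⟩⟩

section deleteAt

-- `τ ↑t` reads the position `t : ℕ`; the cast wraps around modulo `n + 1`, so every statement
-- below keeps `t ≤ n`.
open Fin.NatCast

variable {n : ℕ} (τ : Equiv.Perm (Fin (n + 1)))

theorem succAbove_deleteAt (i : Fin (n + 1)) (k : Fin n) :
    (τ i).succAbove (deleteAt τ i k) = τ (i.succAbove k) := by
  have hne : τ (i.succAbove k) ≠ τ i := τ.injective.ne (Fin.succAbove_ne i k)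
  obtain ⟨m, hm⟩ := Fin.exists_succAbove_eq hne
  have h : some (deleteAt τ i k) = finSuccEquiv' (τ i) (τ (i.succAbove k)) :=
    Equiv.removeNone_some _ ⟨m, by simp [← hm]⟩
  rw [← hm, finSuccEquiv'_succAbove] at h
  rw [Option.some_injective _ h, hm]

theorem val_deleteAt (i : Fin (n + 1)) (k : Fin n) :
    (deleteAt τ i k : ℕ) = if (τ i : ℕ) < τ (i.succAbove k)
      then (τ (i.succAbove k) : ℕ) - 1 else τ (i.succAbove k) := by
  have h := congrArg Fin.val (succAbove_deleteAt τ i k)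
  rw [Fin.val_succAbove] at h
  split_ifs at h ⊢ <;> omega

theorem injOn_val_natCast : Set.InjOn (fun t : ℕ => (τ t : ℕ)) (Set.Iic n) := by
  intro s hs t ht hst
  have := congrArg Fin.val (τ.injective (Fin.ext hst))
  rwa [Fin.val_cast_of_lt (Nat.lt_succ_of_le hs), Fin.val_cast_of_lt (Nat.lt_succ_of_le ht)]
    at this

theorem step_of_deleteAt_eq {i j : Fin (n + 1)} (h : deleteAt τ i = deleteAt τ j) {t : ℕ}
    (hit : (i : ℕ) ≤ t) (htj : t < j) :
    (τ (t + 1 : ℕ) : ℕ) = τ t + 1 ∨ (τ t : ℕ) = τ (t + 1 : ℕ) + 1 := by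
  -- At index `t` the two deletions read `τ (t + 1)` and `τ t`, each lowered by at most one.
  have htn : t < n := by omega
  set k : Fin n := ⟨t, htn⟩
  have hi : i.succAbove k = (t + 1 : ℕ) := Fin.ext <| by
    rw [Fin.val_succAbove, Fin.val_cast_of_lt (by omega), if_neg (by simp [k]; omega)]
  have hj : j.succAbove k = t := Fin.ext <| by
    rw [Fin.val_succAbove, Fin.val_cast_of_lt (by omega), if_pos (by simp [k]; omega)]
  have hne : (τ (t + 1 : ℕ) : ℕ) ≠ τ t := fun e => by
    have := injOn_val_natCast τ (by simp; omega) (by simp; omega) e; omega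
  have := congrArg Fin.val (Equiv.ext_iff.mp h k)
  rw [val_deleteAt, val_deleteAt, hi, hj] at this
  split_ifs at this <;> omega

theorem deleteAt_natCast_eq_deleteAt_succ {t : ℕ} (htn : t < n)
    (h : (τ (t + 1 : ℕ) : ℕ) = τ t + 1 ∨ (τ t : ℕ) = τ (t + 1 : ℕ) + 1) :
    deleteAt τ t = deleteAt τ (t + 1 : ℕ) := by
  set p : Fin (n + 1) := Nat.cast t
  set q : Fin (n + 1) := Nat.cast (t + 1)
  have hp : (p : ℕ) = t := Fin.val_cast_of_lt (by omega)
  have hq : (q : ℕ) = t + 1 := Fin.val_cast_of_lt (by omega)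
  ext k
  rw [val_deleteAt, val_deleteAt]
  by_cases hkt : (k : ℕ) = t
  · have hpk : p.succAbove k = q := Fin.ext (by rw [Fin.val_succAbove]; split_ifs <;> omega)
    have hqk : q.succAbove k = p := Fin.ext (by rw [Fin.val_succAbove]; split_ifs <;> omega)
    rw [hpk, hqk]
    split_ifs <;> omega
  · have hpq : p.succAbove k = q.succAbove k :=
      Fin.ext (by rw [Fin.val_succAbove, Fin.val_succAbove]; split_ifs <;> omega)
    have hne_p : (τ (q.succAbove k) : ℕ) ≠ τ p :=
      Fin.val_ne_of_ne (τ.injective.ne (hpq ▸ Fin.succAbove_ne p k))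
    have hne_q : (τ (q.succAbove k) : ℕ) ≠ τ q :=
      Fin.val_ne_of_ne (τ.injective.ne (Fin.succAbove_ne q k))
    rw [hpq]
    split_ifs <;> omega

theorem deleteAt_eq_iff_isNatRunOn {i j : Fin (n + 1)} (hij : i ≤ j) :
    deleteAt τ i = deleteAt τ j ↔ IsNatRunOn (fun t : ℕ => (τ t : ℕ)) i j := by
  refine ⟨fun h => .of_injOn ?_ fun t hit htj => step_of_deleteAt_eq τ h hit htj, fun h => ?_⟩
  · exact (injOn_val_natCast τ).mono fun t ht => by
      simp only [Set.mem_Icc, Set.mem_Iic] at ht ⊢; omega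
  · simpa using Nat.eq_of_forall_eq_succ (g := fun t : ℕ => deleteAt τ t) hij
      fun t hit htj => deleteAt_natCast_eq_deleteAt_succ τ (by omega) (h.step hit htj)

theorem isRunOn_iff_isNatRunOn {lo hi : Fin (n + 1)} :
    IsRunOn τ lo hi ↔ lo ≤ hi ∧ IsNatRunOn (fun t : ℕ => (τ t : ℕ)) lo hi := by
  have key (P : ℕ → ℕ → ℕ → ℕ → Prop) :
      (∀ k l : Fin (n + 1), lo ≤ k → k ≤ l → l ≤ hi → P k l (τ k) (τ l)) ↔
        ∀ k l : ℕ, (lo : ℕ) ≤ k → k ≤ l → l ≤ (hi : ℕ) → P k l (τ k) (τ l) := by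
    refine ⟨fun h k l hk hkl hl => ?_, fun h k l hk hkl hl => by simpa using h k l hk hkl hl⟩
    have hkn : k < n + 1 := by omega
    have hln : l < n + 1 := by omega
    have := h k l (Fin.le_def.mpr ?_) (Fin.le_def.mpr ?_) (Fin.le_def.mpr ?_)
    · rwa [Fin.val_cast_of_lt hkn, Fin.val_cast_of_lt hln] at this
    all_goals simp only [Fin.val_cast_of_lt hkn, Fin.val_cast_of_lt hln]; omega
  exact and_congr_right fun _ => or_congr (key fun k l x y => y = x + (l - k))
    (key fun k l x y => x = y + (l - k))

end deleteAt

/-- Positions `i` and `j` of a permutation `τ` satisfy `τ − {i} = τ − {j}`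
if and only if `i` and `j` are positions in the same run of `τ`. -/
theorem delete_eq_iff_sameRun (n : ℕ) (τ : Equiv.Perm (Fin (n + 1)))
    (i j : Fin (n + 1)) :
    deleteAt τ i = deleteAt τ j ↔ SameRun τ i j := by
  wlog hij : i ≤ j generalizing i j
  · exact eq_comm.trans ((this j i (le_of_not_ge hij)).trans sameRun_comm)
  rw [deleteAt_eq_iff_isNatRunOn τ hij, sameRun_iff_isRunOn hij, isRunOn_iff_isNatRunOn,
    and_iff_right hij]
end

section
/- Let σ be a permutation of length k ≥ 2. If σ is indecomposable (not expressible as a direct sum of two nonempty permutations), then the permutation σ ⊕ σ contains exactly two occurrences of σ as a pattern, namely the occurrence consisting of the first k letters and the one consisting of the last k letters. -/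
open scoped Classical

lemma pds_castAdd {k : ℕ} (σ : Equiv.Perm (Fin k)) (a : Fin k) :
    pds σ σ (Fin.castAdd k a) = Fin.castAdd k (σ a) := by simp [pds]

lemma pds_natAdd {k : ℕ} (σ : Equiv.Perm (Fin k)) (a : Fin k) :
    pds σ σ (Fin.natAdd k a) = Fin.natAdd k (σ a) := by
  simp only [pds, Equiv.trans_apply, finSumFinEquiv_symm_apply_natAdd,
    Equiv.sumCongr_apply, Sum.map_inr, finSumFinEquiv_apply_right]

lemma strictMono_fin_id {k : ℕ} (g : Fin k → Fin k) (h : StrictMono g) : g = id := by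
  have hs : Function.Bijective g := (Fintype.bijective_iff_injective_and_card g).2 ⟨h.injective, rfl⟩
  let e : Fin k ≃o Fin k := StrictMono.orderIsoOfSurjective g h hs.2
  have he : e = OrderIso.refl (Fin k) := Subsingleton.elim _ _
  funext i
  have : e i = g i := rfl
  rw [he] at this
  exact this.symm

/-- If `σ` is an indecomposable permutation of length `k ≥ 2`, then `σ ⊕ σ`
contains exactly two occurrences of `σ`: the first `k` letters and the last
`k` letters. -/
theorem indecomposable_sum_two_occurrences (k : ℕ) (hk : 2 ≤ k)
    (σ : Equiv.Perm (Fin k)) (hσ : ¬ Decomp σ) :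
    (StrictMono (Fin.castAdd k : Fin k → Fin (k + k)) ∧
      ∀ a b : Fin k, σ a ≤ σ b ↔
        (pds σ σ) (Fin.castAdd k a) ≤ (pds σ σ) (Fin.castAdd k b)) ∧
    (StrictMono (Fin.natAdd k : Fin k → Fin (k + k)) ∧
      ∀ a b : Fin k, σ a ≤ σ b ↔
        (pds σ σ) (Fin.natAdd k a) ≤ (pds σ σ) (Fin.natAdd k b)) ∧
    (∀ f : Fin k → Fin (k + k), StrictMono f →
      (∀ a b : Fin k, σ a ≤ σ b ↔ (pds σ σ) (f a) ≤ (pds σ σ) (f b)) →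
      f = Fin.castAdd k ∨ f = Fin.natAdd k) := by
  refine ⟨⟨Fin.strictMono_castAdd k, fun a b => ?_⟩,
    ⟨Fin.strictMono_natAdd k, fun a b => ?_⟩, fun f hf hiff => ?_⟩
  · rw [pds_castAdd, pds_castAdd]
    simp only [Fin.le_def, Fin.coe_castAdd]
  · rw [pds_natAdd, pds_natAdd]
    simp only [Fin.le_def, Fin.coe_natAdd]
    omega
  · -- uniqueness
    by_cases hall : ∀ i : Fin k, (f i : ℕ) < k
    · left
      have : (fun i : Fin k => (⟨(f i : ℕ), hall i⟩ : Fin k)) = id :=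
        strictMono_fin_id _ (fun a b hab => by
          simp only [Fin.lt_def]; exact hf hab)
      funext i
      have := congrFun this i
      simp only [id_eq] at this
      apply Fin.ext
      simpa [Fin.ext_iff] using this
    · push_neg at hall
      by_cases hall2 : ∀ i : Fin k, k ≤ (f i : ℕ)
      · right
        have : (fun i : Fin k => (⟨(f i : ℕ) - k, by
            have := (f i).isLt; omega⟩ : Fin k)) = id :=
          strictMono_fin_id _ (fun a b hab => by
            have h1 := hall2 a
            have h2 : (f a : ℕ) < f b := hf hab
            simp only [Fin.lt_def]; omega)
        funext i
        have := congrFun this i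
        simp only [id_eq, Fin.ext_iff] at this
        apply Fin.ext
        have := hall2 i
        simp only [Fin.natAdd] at *
        omega
      · -- mixed case: contradiction with indecomposability
        exfalso
        push_neg at hall2
        obtain ⟨j1, hj1⟩ := hall  -- k ≤ f j1
        obtain ⟨j2, hj2⟩ := hall2 -- f j2 < k
        -- T = positions mapped high
        have hTne : (Finset.univ.filter (fun j : Fin k => k ≤ (f j : ℕ))).Nonempty :=
          ⟨j1, by simp [hj1]⟩
        set j0 := (Finset.univ.filter (fun j : Fin k => k ≤ (f j : ℕ))).min' hTne with hj0def
        have hj0mem : k ≤ (f j0 : ℕ) := by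
          have := Finset.min'_mem _ hTne
          simpa using this
        set m : ℕ := (j0 : ℕ) with hmdef
        have hhigh : ∀ i : Fin k, m ≤ (i : ℕ) → k ≤ (f i : ℕ) := by
          intro i hi
          have : f j0 ≤ f i := hf.monotone (by exact hi)
          exact le_trans hj0mem this
        have hlow : ∀ i : Fin k, (i : ℕ) < m → (f i : ℕ) < k := by
          intro i hi
          by_contra hcon
          push_neg at hcon
          have : j0 ≤ i := Finset.min'_le _ _ (by simp [hcon])
          omega
        have hm0 : 0 < m := by
          rcases Nat.eq_zero_or_pos m with h | h
          · exfalso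
            have : k ≤ (f j2 : ℕ) := hhigh j2 (by omega)
            omega
          · exact h
        have hmk : m < k := j0.isLt
        -- key comparison
        have hkey : ∀ a b : Fin k, (a : ℕ) < m → m ≤ (b : ℕ) → σ a < σ b := by
          intro a b ha hb
          have hfa : (f a : ℕ) < k := hlow a ha
          have hfb : k ≤ (f b : ℕ) := hhigh b hb
          have hle : pds σ σ (f a) ≤ pds σ σ (f b) := by
            have e1 : f a = Fin.castAdd k ⟨(f a : ℕ), hfa⟩ := by apply Fin.ext; rfl
            have e2 : f b = Fin.natAdd k ⟨(f b : ℕ) - k, by have := (f b).isLt; omega⟩ := by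
              apply Fin.ext; simp [Fin.natAdd]; omega
            rw [e1, e2, pds_castAdd, pds_natAdd]
            simp only [Fin.le_def, Fin.coe_castAdd, Fin.coe_natAdd]
            have := ((σ : Fin k → Fin k) ⟨(f a : ℕ), hfa⟩).isLt
            omega
          have hσab : σ a ≤ σ b := (hiff a b).2 hle
          have hne : a ≠ b := by intro h; subst h; omega
          exact lt_of_le_of_ne hσab (fun h => hne (σ.injective h))
        apply hσ
        refine ⟨m, hm0, hmk, fun i hi => ?_⟩
        -- count: values σ b for b ≥ m are all above σ i
        by_contra hcon
        push_neg at hcon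
        have hsub : (Finset.Ici (⟨m, hmk⟩ : Fin k)).image σ ⊆ Finset.Ioi (σ i) := by
          intro v hv
          simp only [Finset.mem_image, Finset.mem_Ici] at hv
          obtain ⟨b, hb, rfl⟩ := hv
          simp only [Finset.mem_Ioi]
          exact hkey i b hi hb
        have hcard := Finset.card_le_card hsub
        rw [Finset.card_image_of_injective _ σ.injective, Fin.card_Ici, Fin.card_Ioi] at hcard
        have := (σ i).isLt
        simp only [Fin.val_mk] at hcard
        omega
end

section
/- Let σ be an indecomposable permutation of length k ≥ 2. Then the open interval (σ, σ ⊕ σ) in the permutation pattern poset is disconnected; explicitly, it is the disjoint union of the set S of permutations in (σ, σ⊕σ) of the form A ⊕ ρ where A is the unique occurrence of σ and ρ nonempty, and the set T of those of the form ρ ⊕ A with A the unique occurrence of σ and ρ nonempty, and no element of S is comparable to an element of T. -/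
/-!
An occurrence of an indecomposable `σ` in a direct sum `α ⊕ β` cannot straddle the two
blocks: the cut would separate a proper initial segment of `σ` from the rest, i.e. decompose
`σ`. For `σ < π < σ ⊕ σ`, composing occurrences `σ → π → σ ⊕ σ` therefore puts `σ` inside
one block of `σ ⊕ σ`; pulling that cut back to `π` shows `π = σ ⊕ ρ` or `π = ρ ⊕ σ` with
`0 < |ρ| < |σ|`, and the same straddling argument makes that copy of `σ` the only one.
Embedding `σ ⊕ ρ` into `ρ' ⊕ σ` would send its `σ` onto the final block, leaving no room
for `ρ`, and symmetrically; `σ ⊕ 1` and `1 ⊕ σ` show that both parts are nonempty.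
-/

open scoped Classical

/-- The set `S`: permutations in the open interval `(σ, σ⊕σ)` of the form
`A ⊕ ρ` with `ρ` nonempty, where the prefix `A` is the only occurrence of `σ`. -/
def Sset (k : ℕ) (σ : Equiv.Perm (Fin k)) : Set PermPt :=
  {π | (plt ⟨k, σ⟩ π ∧ plt π ⟨k + k, pds σ σ⟩) ∧
    ∃ m : ℕ, 0 < m ∧ ∃ ρ : Equiv.Perm (Fin m), π = ⟨k + m, pds σ ρ⟩ ∧
      ∀ f : Fin k → Fin π.1, StrictMono f →
        (∀ a b : Fin k, σ a ≤ σ b ↔ π.2 (f a) ≤ π.2 (f b)) →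
        ∀ x : Fin k, (f x : ℕ) = (x : ℕ)}

/-- The set `T`: permutations in the open interval `(σ, σ⊕σ)` of the form
`ρ ⊕ A` with `ρ` nonempty, where the suffix `A` is the only occurrence of `σ`. -/
def Tset (k : ℕ) (σ : Equiv.Perm (Fin k)) : Set PermPt :=
  {π | (plt ⟨k, σ⟩ π ∧ plt π ⟨k + k, pds σ σ⟩) ∧
    ∃ m : ℕ, 0 < m ∧ ∃ ρ : Equiv.Perm (Fin m), π = ⟨m + k, pds ρ σ⟩ ∧
      ∀ f : Fin k → Fin π.1, StrictMono f →
        (∀ a b : Fin k, σ a ≤ σ b ↔ π.2 (f a) ≤ π.2 (f b)) →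
        ∀ x : Fin k, (f x : ℕ) = m + (x : ℕ)}

open Finset in
theorem val_add_sub_le_val_of_strictMono {a b : ℕ} {f : Fin a → Fin b} (hf : StrictMono f)
    {i j : Fin a} (hij : i ≤ j) : (f i : ℕ) + (j - i) ≤ f j := by
  have hsub : (Ioc i j).image f ⊆ Ioc (f i) (f j) := by
    intro y hy
    obtain ⟨x, hx, rfl⟩ := mem_image.1 hy
    exact mem_Ioc.2 ⟨hf (mem_Ioc.1 hx).1, hf.monotone (mem_Ioc.1 hx).2⟩
  have hcard := card_le_card hsub
  rw [card_image_of_injective _ hf.injective, Fin.card_Ioc, Fin.card_Ioc] at hcard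
  have hfij : (f i : ℕ) ≤ f j := hf.monotone hij
  omega

theorem le_val_of_strictMono {a b : ℕ} {f : Fin a → Fin b} (hf : StrictMono f) (i : Fin a) :
    (i : ℕ) ≤ f i := by
  have := val_add_sub_le_val_of_strictMono hf (i := ⟨0, i.pos⟩) (j := i) (Nat.zero_le _)
  simp only at this
  omega

theorem val_add_sub_le_of_strictMono {a b : ℕ} {f : Fin a → Fin b} (hf : StrictMono f)
    (i : Fin a) : (f i : ℕ) + (a - i) ≤ b := by
  have := i.isLt
  have hlast : i ≤ ⟨a - 1, by omega⟩ := Fin.le_def.2 (Nat.le_sub_one_of_lt i.isLt)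
  have := val_add_sub_le_val_of_strictMono hf hlast
  have := (f ⟨a - 1, by omega⟩).isLt
  simp only at *
  omega

theorem val_eq_add_of_strictMono {a b c : ℕ} {f : Fin a → Fin b} (hf : StrictMono f)
    (hc : ∀ x, c ≤ (f x : ℕ)) (hca : ∀ x, (f x : ℕ) < c + a) (i : Fin a) :
    (f i : ℕ) = c + i := by
  have := i.isLt
  have hlow := val_add_sub_le_val_of_strictMono hf (i := ⟨0, i.pos⟩) (j := i) (Nat.zero_le _)
  have hhigh := val_add_sub_le_val_of_strictMono hf (i := i) (j := ⟨a - 1, by omega⟩)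
    (Fin.le_def.2 (Nat.le_sub_one_of_lt i.isLt))
  have := hc ⟨0, i.pos⟩
  have := hca ⟨a - 1, by omega⟩
  simp only at *
  omega

theorem Equiv.Perm.eq_of_le_iff_le {k : ℕ} {σ τ : Equiv.Perm (Fin k)}
    (h : ∀ i j, σ i ≤ σ j ↔ τ i ≤ τ j) : σ = τ := by
  have hmono : StrictMono (τ ∘ σ.symm) :=
    Monotone.strictMono_of_injective (fun u v huv => (h _ _).1 (by simpa using huv))
      (τ.injective.comp σ.symm.injective)
  ext i
  simpa using congrArg Fin.val (hmono.apply_eq (x := σ i)).symm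

/-- `ple ⟨a, σ⟩ ⟨b, τ⟩` unfolds to `∃ f, IsOccurrence σ τ f`. -/
def IsOccurrence {a b : ℕ} (σ : Equiv.Perm (Fin a)) (τ : Equiv.Perm (Fin b))
    (f : Fin a → Fin b) : Prop :=
  StrictMono f ∧ ∀ i j, σ i ≤ σ j ↔ τ (f i) ≤ τ (f j)

namespace IsOccurrence

variable {a b c : ℕ} {σ : Equiv.Perm (Fin a)} {π : Equiv.Perm (Fin b)}
  {τ : Equiv.Perm (Fin c)} {f : Fin a → Fin b} {g : Fin b → Fin c}

theorem comp (hg : IsOccurrence π τ g) (hf : IsOccurrence σ π f) :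
    IsOccurrence σ τ (g ∘ f) :=
  ⟨hg.1.comp hf.1, fun i j => (hf.2 i j).trans (hg.2 _ _)⟩

theorem apply_lt_apply_iff (hf : IsOccurrence σ π f) {i j : Fin a} :
    σ i < σ j ↔ π (f i) < π (f j) := by
  simpa only [not_le] using (hf.2 j i).not

theorem eq_of_length_eq {σ τ : Equiv.Perm (Fin a)} {f : Fin a → Fin a}
    (hf : IsOccurrence σ τ f) : σ = τ := by
  have hid : f = id := hf.1.eq_id
  subst hid
  exact Equiv.Perm.eq_of_le_iff_le hf.2

end IsOccurrence

theorem isOccurrence_refl {a : ℕ} (σ : Equiv.Perm (Fin a)) : IsOccurrence σ σ id :=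
  ⟨strictMono_id, fun _ _ => Iff.rfl⟩

theorem isOccurrence_one {b : ℕ} (τ : Equiv.Perm (Fin b)) (x : Fin b) :
    IsOccurrence (1 : Equiv.Perm (Fin 1)) τ (fun _ => x) :=
  ⟨Subsingleton.strictMono _, fun i j => by simp [Subsingleton.elim i j]⟩

theorem length_le_of_ple {s t : PermPt} (h : ple s t) : s.1 ≤ t.1 :=
  h.elim fun f hf => Fin.le_of_injective f hf.1.injective

theorem plt_iff_ple_and_length_lt {s t : PermPt} : plt s t ↔ ple s t ∧ s.1 < t.1 := by
  refine ⟨fun h => ⟨h.1, (length_le_of_ple h.1).lt_of_ne fun hst => ?_⟩,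
    fun h => ⟨h.1, fun h' => (length_le_of_ple h').not_gt h.2⟩⟩
  obtain ⟨n, σ⟩ := s
  obtain ⟨n', τ⟩ := t
  obtain rfl : n = n' := hst
  obtain ⟨f, hf⟩ := h.1
  obtain rfl := IsOccurrence.eq_of_length_eq hf
  exact h.2 ⟨id, isOccurrence_refl σ⟩

theorem Fin.castAdd_lt_natAdd {m n : ℕ} (i : Fin m) (j : Fin n) :
    Fin.castAdd n i < Fin.natAdd m j :=
  Fin.lt_def.2 (Nat.lt_add_right _ i.isLt)

section DirectSum

variable {m n : ℕ} (α : Equiv.Perm (Fin m)) (β : Equiv.Perm (Fin n))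

@[simp]
theorem pds_castAdd_s4 (i : Fin m) : pds α β (Fin.castAdd n i) = Fin.castAdd n (α i) := by
  simp [pds]

@[simp]
theorem pds_natAdd_s4 (j : Fin n) : pds α β (Fin.natAdd m j) = Fin.natAdd m (β j) := by
  simp [pds]

theorem val_pds_lt_iff (i : Fin (m + n)) : ((pds α β i : Fin (m + n)) : ℕ) < m ↔ (i : ℕ) < m := by
  induction i using Fin.addCases <;> simp

theorem isOccurrence_castAdd : IsOccurrence α (pds α β) (Fin.castAdd n) :=
  ⟨Fin.strictMono_castAdd n, fun i j => by simp [(Fin.strictMono_castAdd n).le_iff_le]⟩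

theorem isOccurrence_natAdd : IsOccurrence β (pds α β) (Fin.natAdd m) :=
  ⟨Fin.strictMono_natAdd m, fun i j => by simp⟩

variable {α β}

theorem IsOccurrence.eq_of_castAdd {σ : Equiv.Perm (Fin m)}
    (h : IsOccurrence σ (pds α β) (Fin.castAdd n)) : σ = α :=
  Equiv.Perm.eq_of_le_iff_le fun i j => (h.2 i j).trans ((isOccurrence_castAdd α β).2 i j).symm

theorem IsOccurrence.eq_of_natAdd {σ : Equiv.Perm (Fin n)}
    (h : IsOccurrence σ (pds α β) (Fin.natAdd m)) : σ = β :=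
  Equiv.Perm.eq_of_le_iff_le fun i j => (h.2 i j).trans ((isOccurrence_natAdd α β).2 i j).symm

theorem IsOccurrence.pds_pds {m' n' : ℕ} {α' : Equiv.Perm (Fin m')} {β' : Equiv.Perm (Fin n')}
    {f : Fin m → Fin m'} {g : Fin n → Fin n'} (hf : IsOccurrence α α' f)
    (hg : IsOccurrence β β' g) :
    IsOccurrence (pds α β) (pds α' β')
      (Fin.addCases (fun i => Fin.castAdd n' (f i)) (fun j => Fin.natAdd m' (g j))) := by
  have hcast := Fin.strictMono_castAdd (m := n') (n := m')
  refine ⟨fun x y hxy => ?_, fun x y => ?_⟩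
  · induction x using Fin.addCases <;> induction y using Fin.addCases
    · simpa [hcast.lt_iff_lt, hf.1.lt_iff_lt, (Fin.strictMono_castAdd n).lt_iff_lt] using hxy
    · simpa using Fin.castAdd_lt_natAdd _ _
    · exact absurd hxy (Fin.castAdd_lt_natAdd _ _).not_gt
    · simpa [hg.1.lt_iff_lt] using hxy
  · induction x using Fin.addCases <;> induction y using Fin.addCases
    · simp [hcast.le_iff_le, (Fin.strictMono_castAdd n).le_iff_le, hf.2]
    · simp [(Fin.castAdd_lt_natAdd _ _).le]
    · simp [(Fin.castAdd_lt_natAdd _ _).not_ge]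
    · simp [hg.2]

end DirectSum

open Finset in
theorem val_lt_iff_of_separated {n c : ℕ} {π : Equiv.Perm (Fin n)}
    (h : ∀ x y : Fin n, (x : ℕ) < c → c ≤ (y : ℕ) → π x < π y) (x : Fin n) :
    (π x : ℕ) < c ↔ (x : ℕ) < c := by
  rcases le_or_gt n c with hnc | hcn
  · exact iff_of_true (by omega) (by omega)
  refine ⟨fun hπx => not_le.1 fun hx => ?_, fun hx => ?_⟩
  · have hsub : (Iio ⟨c, hcn⟩).image π ⊆ Iio (π x) :=
      image_subset_iff.2 fun y hy => mem_Iio.2 (h y x (Fin.lt_def.1 (mem_Iio.1 hy)) hx)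
    have hcard := card_le_card hsub
    rw [card_image_of_injective _ π.injective, Fin.card_Iio, Fin.card_Iio] at hcard
    simp only at hcard
    omega
  · have hsub : (Ici ⟨c, hcn⟩).image π ⊆ Ioi (π x) :=
      image_subset_iff.2 fun y hy => mem_Ioi.2 (h x y hx (Fin.le_def.1 (mem_Ici.1 hy)))
    have hcard := card_le_card hsub
    rw [card_image_of_injective _ π.injective, Fin.card_Ici, Fin.card_Ioi] at hcard
    simp only at hcard
    omega

theorem exists_eq_pds_of_separated {m n : ℕ} (π : Equiv.Perm (Fin (m + n)))
    (h : ∀ x y : Fin (m + n), (x : ℕ) < m → m ≤ (y : ℕ) → π x < π y) :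
    ∃ (α : Equiv.Perm (Fin m)) (β : Equiv.Perm (Fin n)), π = pds α β := by
  have hlo (i : Fin m) : (π (Fin.castAdd n i) : ℕ) < m :=
    (val_lt_iff_of_separated h _).2 (by simp)
  have hhi (j : Fin n) : m ≤ (π (Fin.natAdd m j) : ℕ) :=
    not_lt.1 fun hj => by simpa using (val_lt_iff_of_separated h _).1 hj
  let α : Equiv.Perm (Fin m) := Equiv.ofBijective (fun i => ⟨π (Fin.castAdd n i), hlo i⟩) <|
    Finite.injective_iff_bijective.1 fun i i' hii' =>
      Fin.castAdd_injective _ _ (π.injective (Fin.ext (Fin.mk.inj_iff.1 hii')))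
  let β : Equiv.Perm (Fin n) :=
    Equiv.ofBijective (fun j => ⟨π (Fin.natAdd m j) - m, by have := hhi j; omega⟩) <|
      Finite.injective_iff_bijective.1 fun j j' hjj' => by
        have := Fin.mk.inj_iff.1 hjj'
        have := hhi j
        have := hhi j'
        exact Fin.natAdd_injective _ _ (π.injective (Fin.ext (by omega)))
  refine ⟨α, β, Equiv.ext fun i => ?_⟩
  induction i using Fin.addCases with
  | left i => ext; simp [α]
  | right j =>
    ext
    simp only [pds_natAdd_s4, Equiv.ofBijective_apply, Fin.val_natAdd, β]
    have := hhi j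
    omega

theorem IsOccurrence.apply_lt_apply_of_lt_of_le {k p q : ℕ} {π : Equiv.Perm (Fin k)}
    {α : Equiv.Perm (Fin p)} {β : Equiv.Perm (Fin q)} {g : Fin k → Fin (p + q)}
    (hg : IsOccurrence π (pds α β) g) {x y : Fin k} (hx : (g x : ℕ) < p) (hy : p ≤ (g y : ℕ)) :
    π x < π y := by
  have hαx := (val_pds_lt_iff α β (g x)).2 hx
  have hβy := (val_pds_lt_iff α β (g y)).not.2 (not_lt.2 hy)
  exact hg.apply_lt_apply_iff.2 (Fin.lt_def.2 (by omega))

theorem IsOccurrence.forall_lt_or_forall_le {k p q : ℕ} {σ : Equiv.Perm (Fin k)}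
    (hσ : ¬ Decomp σ) {α : Equiv.Perm (Fin p)} {β : Equiv.Perm (Fin q)}
    {f : Fin k → Fin (p + q)} (hf : IsOccurrence σ (pds α β) f) :
    (∀ x, (f x : ℕ) < p) ∨ (∀ x, p ≤ (f x : ℕ)) := by
  by_contra! ⟨⟨x₀, hx₀⟩, ⟨y₀, hy₀⟩⟩
  -- `Nat.find hex`, the first position sent into the `β` block, is a cut decomposing `σ`.
  have hex : ∃ c, ∃ hc : c < k, p ≤ (f ⟨c, hc⟩ : ℕ) := ⟨x₀, x₀.isLt, hx₀⟩
  obtain ⟨hck, hc⟩ := Nat.find_spec hex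
  have hlow (x : Fin k) (hx : (x : ℕ) < Nat.find hex) : (f x : ℕ) < p :=
    not_le.1 fun h => Nat.find_min hex hx ⟨x.isLt, h⟩
  have hhigh (y : Fin k) (hy : Nat.find hex ≤ (y : ℕ)) : p ≤ (f y : ℕ) :=
    hc.trans (hf.1.monotone (Fin.le_def.2 hy))
  have hsep (x y : Fin k) (hx : (x : ℕ) < Nat.find hex) (hy : Nat.find hex ≤ (y : ℕ)) :
      σ x < σ y :=
    hf.apply_lt_apply_of_lt_of_le (hlow x hx) (hhigh y hy)
  have hpos : 0 < Nat.find hex := Nat.pos_of_ne_zero fun h0 => by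
    have := hhigh y₀ (by omega)
    omega
  exact hσ ⟨_, hpos, hck, fun i hi => (val_lt_iff_of_separated hsep i).2 hi⟩

section

variable {k m : ℕ} {σ : Equiv.Perm (Fin k)}

theorem IsOccurrence.val_eq_of_pds_left (hσ : ¬ Decomp σ) (hm : m < k)
    {α : Equiv.Perm (Fin k)} {ρ : Equiv.Perm (Fin m)} {f : Fin k → Fin (k + m)}
    (hf : IsOccurrence σ (pds α ρ) f) (x : Fin k) : (f x : ℕ) = x := by
  have hlt : ∀ x, (f x : ℕ) < k := (hf.forall_lt_or_forall_le hσ).resolve_right fun hge => by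
    have := val_add_sub_le_of_strictMono hf.1 ⟨0, by omega⟩
    have := hge ⟨0, by omega⟩
    simp only at *
    omega
  simpa using val_eq_add_of_strictMono hf.1 (c := 0) (fun _ => Nat.zero_le _) (by simpa using hlt) x

theorem IsOccurrence.val_eq_of_pds_right (hσ : ¬ Decomp σ) (hm : m < k)
    {α : Equiv.Perm (Fin k)} {ρ : Equiv.Perm (Fin m)} {f : Fin k → Fin (m + k)}
    (hf : IsOccurrence σ (pds ρ α) f) (x : Fin k) : (f x : ℕ) = m + x := by
  have hge : ∀ x, m ≤ (f x : ℕ) := (hf.forall_lt_or_forall_le hσ).resolve_left fun hlt => by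
    have := le_val_of_strictMono hf.1 ⟨k - 1, by omega⟩
    have := hlt ⟨k - 1, by omega⟩
    simp only at *
    omega
  exact val_eq_add_of_strictMono hf.1 hge (fun x => (f x).isLt) x

theorem exists_eq_pds_left {π : Equiv.Perm (Fin (k + m))} {f : Fin k → Fin (k + m)}
    {g : Fin (k + m) → Fin (k + k)} (hf : IsOccurrence σ π f) (hg : IsOccurrence π (pds σ σ) g)
    (hgf : ∀ x, (g (f x) : ℕ) < k) : ∃ ρ : Equiv.Perm (Fin m), π = pds σ ρ := by
  have hgf_eq (x : Fin k) : (g (f x) : ℕ) = x := by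
    simpa using val_eq_add_of_strictMono (hg.1.comp hf.1) (c := 0) (fun _ => Nat.zero_le _)
      (by simpa using hgf) x
  have hf_eq : f = Fin.castAdd m := funext fun x => Fin.ext <|
    le_antisymm ((le_val_of_strictMono hg.1 (f x)).trans (hgf_eq x).le)
      (le_val_of_strictMono hf.1 x)
  subst hf_eq
  have hsep (x y : Fin (k + m)) (hx : (x : ℕ) < k) (hy : k ≤ (y : ℕ)) : π x < π y := by
    have hgx : (g x : ℕ) = x := by simpa using hgf_eq ⟨x, hx⟩
    have hgy : g (Fin.castAdd m ⟨k - 1, by omega⟩) < g y :=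
      hg.1 (Fin.lt_def.2 (show k - 1 < (y : ℕ) by omega))
    have hgk : (g (Fin.castAdd m ⟨k - 1, by omega⟩) : ℕ) = k - 1 := hgf_eq _
    rw [Fin.lt_def] at hgy
    exact hg.apply_lt_apply_of_lt_of_le (by omega) (by omega)
  obtain ⟨α, ρ, rfl⟩ := exists_eq_pds_of_separated π hsep
  exact ⟨ρ, by rw [hf.eq_of_castAdd]⟩

theorem exists_eq_pds_right {π : Equiv.Perm (Fin (m + k))} {f : Fin k → Fin (m + k)}
    {g : Fin (m + k) → Fin (k + k)} (hf : IsOccurrence σ π f) (hg : IsOccurrence π (pds σ σ) g)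
    (hgf : ∀ x, k ≤ (g (f x) : ℕ)) : ∃ ρ : Equiv.Perm (Fin m), π = pds ρ σ := by
  have hgf_eq (x : Fin k) : (g (f x) : ℕ) = k + x :=
    val_eq_add_of_strictMono (hg.1.comp hf.1) hgf (fun x => (g (f x)).isLt) x
  have hf_eq : f = Fin.natAdd m := funext fun x => Fin.ext <| by
    have := val_add_sub_le_of_strictMono hf.1 x
    have := val_add_sub_le_of_strictMono hg.1 (f x)
    have := hgf_eq x
    have := (f x).isLt
    rw [Fin.val_natAdd]
    omega
  subst hf_eq
  have hsep (x y : Fin (m + k)) (hx : (x : ℕ) < m) (hy : m ≤ (y : ℕ)) : π x < π y := by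
    have hk : 0 < k := by have := y.isLt; omega
    have hgx : g x < g (Fin.natAdd m ⟨0, hk⟩) := hg.1 (Fin.lt_def.2 (show (x : ℕ) < m + 0 by omega))
    have hgk : (g (Fin.natAdd m ⟨0, hk⟩) : ℕ) = k := hgf_eq _
    have hgy : (g y : ℕ) = k + (y - m) := by
      have hy' : Fin.natAdd m ⟨y - m, by omega⟩ = y := Fin.ext (show m + (y - m) = (y : ℕ) by omega)
      simpa [hy'] using hgf_eq ⟨y - m, by omega⟩
    rw [Fin.lt_def] at hgx
    exact hg.apply_lt_apply_of_lt_of_le (by omega) (by omega)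
  obtain ⟨ρ, β, rfl⟩ := exists_eq_pds_of_separated π hsep
  exact ⟨ρ, by rw [hf.eq_of_natAdd]⟩

theorem mem_Sset_union_Tset (hσ : ¬ Decomp σ) {π : PermPt} (h1 : plt ⟨k, σ⟩ π)
    (h2 : plt π ⟨k + k, pds σ σ⟩) : π ∈ Sset k σ ∪ Tset k σ := by
  obtain ⟨n, π⟩ := π
  have hkn : k < n := (plt_iff_ple_and_length_lt.1 h1).2
  have hnk : n < k + k := (plt_iff_ple_and_length_lt.1 h2).2
  obtain ⟨f, hf⟩ : ∃ f, IsOccurrence σ π f := h1.1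
  obtain ⟨g, hg⟩ : ∃ g, IsOccurrence π (pds σ σ) g := h2.1
  rcases (hg.comp hf).forall_lt_or_forall_le hσ with hA | hB
  · obtain ⟨m, rfl⟩ : ∃ m, n = k + m := ⟨n - k, by omega⟩
    obtain ⟨ρ, rfl⟩ := exists_eq_pds_left hf hg hA
    exact Or.inl ⟨⟨h1, h2⟩, m, by omega, ρ, rfl,
      fun f' hf' hp' => IsOccurrence.val_eq_of_pds_left hσ (by omega) ⟨hf', hp'⟩⟩
  · obtain ⟨m, rfl⟩ : ∃ m, n = m + k := ⟨n - k, by omega⟩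
    obtain ⟨ρ, rfl⟩ := exists_eq_pds_right hf hg hB
    exact Or.inr ⟨⟨h1, h2⟩, m, by omega, ρ, rfl,
      fun f' hf' hp' => IsOccurrence.val_eq_of_pds_right hσ (by omega) ⟨hf', hp'⟩⟩

theorem pds_one_mem_Sset (hk : 2 ≤ k) (hσ : ¬ Decomp σ) :
    (⟨k + 1, pds σ (1 : Equiv.Perm (Fin 1))⟩ : PermPt) ∈ Sset k σ := by
  refine ⟨⟨?_, ?_⟩, 1, one_pos, 1, rfl,
    fun f hf hp => IsOccurrence.val_eq_of_pds_left hσ (by omega) ⟨hf, hp⟩⟩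
  · exact plt_iff_ple_and_length_lt.2
      ⟨⟨Fin.castAdd 1, isOccurrence_castAdd σ 1⟩, Nat.lt_succ_self k⟩
  · have h := (isOccurrence_refl σ).pds_pds (isOccurrence_one σ ⟨0, by omega⟩)
    exact plt_iff_ple_and_length_lt.2 ⟨⟨_, h⟩, show k + 1 < k + k by omega⟩

theorem one_pds_mem_Tset (hk : 2 ≤ k) (hσ : ¬ Decomp σ) :
    (⟨1 + k, pds (1 : Equiv.Perm (Fin 1)) σ⟩ : PermPt) ∈ Tset k σ := by
  refine ⟨⟨?_, ?_⟩, 1, one_pos, 1, rfl,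
    fun f hf hp => IsOccurrence.val_eq_of_pds_right hσ (by omega) ⟨hf, hp⟩⟩
  · exact plt_iff_ple_and_length_lt.2
      ⟨⟨Fin.natAdd 1, isOccurrence_natAdd 1 σ⟩, show k < 1 + k by omega⟩
  · have h := (isOccurrence_one σ ⟨0, by omega⟩).pds_pds (isOccurrence_refl σ)
    exact plt_iff_ple_and_length_lt.2 ⟨⟨_, h⟩, show 1 + k < k + k by omega⟩

theorem disjoint_Sset_Tset (hk : 0 < k) : Disjoint (Sset k σ) (Tset k σ) := by
  rw [Set.disjoint_left]
  rintro _ ⟨-, m, -, ρ, rfl, -⟩ ⟨-, m', hm', -, -, huniq⟩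
  have : (0 : ℕ) = m' + 0 :=
    huniq _ (isOccurrence_castAdd σ ρ).1 (isOccurrence_castAdd σ ρ).2 ⟨0, hk⟩
  omega

theorem not_ple_and_not_ple_of_mem_Sset_of_mem_Tset (hk : 0 < k) {x y : PermPt}
    (hx : x ∈ Sset k σ) (hy : y ∈ Tset k σ) : ¬ ple x y ∧ ¬ ple y x := by
  obtain ⟨-, m, hm, ρ, rfl, huX⟩ := hx
  obtain ⟨-, m', hm', ρ', rfl, huY⟩ := hy
  constructor
  · rintro ⟨g, hg⟩
    have hg : IsOccurrence (pds σ ρ) (pds ρ' σ) g := hg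
    have hocc := hg.comp (isOccurrence_castAdd σ ρ)
    have hlast : (g (Fin.castAdd m ⟨k - 1, by omega⟩) : ℕ) = m' + (k - 1) :=
      huY _ hocc.1 hocc.2 _
    have hlt := hg.1 (Fin.castAdd_lt_natAdd (⟨k - 1, by omega⟩ : Fin k) (⟨0, hm⟩ : Fin m))
    have : (g (Fin.natAdd k ⟨0, hm⟩) : ℕ) < m' + k := (g _).isLt
    rw [Fin.lt_def] at hlt
    omega
  · rintro ⟨g, hg⟩
    have hg : IsOccurrence (pds ρ' σ) (pds σ ρ) g := hg
    have hocc := hg.comp (isOccurrence_natAdd ρ' σ)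
    have hfirst : (g (Fin.natAdd m' ⟨0, hk⟩) : ℕ) = 0 := huX _ hocc.1 hocc.2 _
    have hlt := hg.1 (Fin.castAdd_lt_natAdd (⟨0, hm'⟩ : Fin m') (⟨0, hk⟩ : Fin k))
    rw [Fin.lt_def] at hlt
    omega

end

/-- For `σ` indecomposable of length `k ≥ 2`, the open interval `(σ, σ⊕σ)` is
disconnected: it is the disjoint union of the nonempty sets `S` and `T`,
with no comparabilities between `S` and `T`. -/
theorem open_interval_sigma_sum_disconnected (k : ℕ) (hk : 2 ≤ k)
    (σ : Equiv.Perm (Fin k)) (hσ : ¬ Decomp σ) :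
    Sset k σ ∪ Tset k σ = {π | plt ⟨k, σ⟩ π ∧ plt π ⟨k + k, pds σ σ⟩} ∧
    Disjoint (Sset k σ) (Tset k σ) ∧
    (Sset k σ).Nonempty ∧ (Tset k σ).Nonempty ∧
    (∀ x ∈ Sset k σ, ∀ y ∈ Tset k σ, ¬ ple x y ∧ ¬ ple y x) ∧
    Disconn {π | plt ⟨k, σ⟩ π ∧ plt π ⟨k + k, pds σ σ⟩} := by
  have hk0 : 0 < k := by omega
  have hunion : Sset k σ ∪ Tset k σ = {π | plt ⟨k, σ⟩ π ∧ plt π ⟨k + k, pds σ σ⟩} :=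
    (Set.union_subset (fun _ h => h.1) (fun _ h => h.1)).antisymm
      fun _ h => mem_Sset_union_Tset hσ h.1 h.2
  have hS : (Sset k σ).Nonempty := ⟨_, pds_one_mem_Sset hk hσ⟩
  have hT : (Tset k σ).Nonempty := ⟨_, one_pds_mem_Tset hk hσ⟩
  have hinc : ∀ x ∈ Sset k σ, ∀ y ∈ Tset k σ, ¬ ple x y ∧ ¬ ple y x :=
    fun _ hx _ hy => not_ple_and_not_ple_of_mem_Sset_of_mem_Tset hk0 hx hy
  exact ⟨hunion, disjoint_Sset_Tset hk0, hS, hT, hinc, _, _, hunion, hS, hT, hinc⟩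
end

section
/- Let P be a rooted forest and u, w ∈ P* in generalized subword order with rk(w) − rk(u) ≥ 3. If u and w are concatenations u = v₁ a v₂ and w = v₁ a a v₂ for some letter a ∈ P and words v₁, v₂ ∈ P*, then the open interval (u,w) is disconnected. -/
open scoped Classical

/-- Generalized subword order on words over a poset `P`. -/
def wle {P : Type*} [PartialOrder P] (u w : List P) : Prop :=
  List.SublistForall₂ (· ≤ ·) u w

/-- Strict generalized subword order. -/
def wlt {P : Type*} [PartialOrder P] (u w : List P) : Prop :=
  wle u w ∧ ¬ wle w u

/-- The rank of a word: the sum of the ranks of its letters. -/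
def wrank {P : Type*} (rk : P → ℕ) (w : List P) : ℕ := (w.map rk).sum

/-- Disconnectedness of a set under a relation `le`: it splits into two
nonempty parts with no comparabilities between them. -/
def GDisconn {α : Type*} (le : α → α → Prop) (S : Set α) : Prop :=
  ∃ A B : Set α, A ∪ B = S ∧ A.Nonempty ∧ B.Nonempty ∧
    ∀ x ∈ A, ∀ y ∈ B, ¬ le x y ∧ ¬ le y x


section Basics
variable {P : Type*} [PartialOrder P]

local notation "F" => List.Forall₂ (α := P) (β := P) (· ≤ ·)

lemma wle_iff {u w : List P} : wle u w ↔ ∃ l, F u l ∧ l.Sublist w :=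
  List.sublistForall₂_iff

lemma wle_refl (u : List P) : wle u u :=
  wle_iff.2 ⟨u, List.forall₂_refl u, List.Sublist.refl u⟩

lemma wle_of_forall₂ {u w : List P} (h : F u w) : wle u w :=
  wle_iff.2 ⟨w, h, List.Sublist.refl w⟩

lemma wle_length {u w : List P} (h : wle u w) : u.length ≤ w.length := by
  obtain ⟨l, hf, hs⟩ := wle_iff.1 h
  exact hf.length_eq ▸ hs.length_le

lemma wle_cons_right {u w : List P} (c : P) (h : wle u w) : wle u (c :: w) :=
  List.SublistForall₂.cons_right h

lemma forall₂_of_wle {u w : List P} (h : wle u w) (hl : w.length ≤ u.length) : F u w := by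
  obtain ⟨l, hf, hs⟩ := wle_iff.1 h
  have h1 : l = w := hs.eq_of_length (le_antisymm hs.length_le (le_trans hl (le_of_eq hf.length_eq)))
  exact h1 ▸ hf

lemma forall₂_antisymm : ∀ {x y : List P}, F x y → F y x → x = y
  | _, _, .nil, _ => rfl
  | _, _, .cons h₁ t₁, h₂ => by
      cases h₂ with
      | cons h₂' t₂' => rw [le_antisymm h₁ h₂', forall₂_antisymm t₁ t₂']

lemma wle_append {u₁ w₁ u₂ w₂ : List P} (h₁ : wle u₁ w₁) (h₂ : wle u₂ w₂) :
    wle (u₁ ++ u₂) (w₁ ++ w₂) := by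
  obtain ⟨l₁, hf₁, hs₁⟩ := wle_iff.1 h₁
  obtain ⟨l₂, hf₂, hs₂⟩ := wle_iff.1 h₂
  exact wle_iff.2 ⟨l₁ ++ l₂, List.rel_append hf₁ hf₂, hs₁.append hs₂⟩

lemma wle_split {x γ δ : List P} (h : wle x (γ ++ δ)) :
    ∃ x₁ x₂, x = x₁ ++ x₂ ∧ wle x₁ γ ∧ wle x₂ δ := by
  obtain ⟨l, hf, hs⟩ := wle_iff.1 h
  obtain ⟨l₁, l₂, rfl, hs₁, hs₂⟩ := List.sublist_append_iff.1 hs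
  refine ⟨x.take l₁.length, x.drop l₁.length, (List.take_append_drop _ x).symm,
    wle_iff.2 ⟨l₁, List.forall₂_take_append x l₁ l₂ hf, hs₁⟩,
    wle_iff.2 ⟨l₂, List.forall₂_drop_append x l₁ l₂ hf, hs₂⟩⟩

lemma wle_cosplit {x₁ x₂ y : List P} (h : wle (x₁ ++ x₂) y) :
    ∃ y₁ y₂, y = y₁ ++ y₂ ∧ wle x₁ y₁ ∧ wle x₂ y₂ := by
  obtain ⟨l, hf, hs⟩ := wle_iff.1 h
  have hf' := hf.flip
  have h1 : List.Forall₂ (flip (· ≤ ·)) (l.take x₁.length) x₁ :=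
    List.forall₂_take_append l x₁ x₂ hf'
  have h2 : List.Forall₂ (flip (· ≤ ·)) (l.drop x₁.length) x₂ :=
    List.forall₂_drop_append l x₁ x₂ hf'
  rw [← List.take_append_drop x₁.length l] at hs
  obtain ⟨y₁, y₂, rfl, hs₁, hs₂⟩ := List.append_sublist_iff.1 hs
  exact ⟨y₁, y₂, rfl, wle_iff.2 ⟨_, h1.flip, hs₁⟩, wle_iff.2 ⟨_, h2.flip, hs₂⟩⟩

lemma wle_singleton_right {x : List P} {a : P} (h : wle x [a]) :
    x = [] ∨ ∃ b, b ≤ a ∧ x = [b] := by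
  obtain ⟨l, hf, hs⟩ := wle_iff.1 h
  rcases List.sublist_singleton.1 hs with rfl | rfl
  · cases hf; exact Or.inl rfl
  · cases hf with
    | cons h1 h2 => cases h2; exact Or.inr ⟨_, h1, rfl⟩

lemma wle_singleton_left {a : P} {r : List P} (h : wle [a] r) : ∃ b ∈ r, a ≤ b := by
  obtain ⟨l, hf, hs⟩ := wle_iff.1 h
  cases hf with
  | cons h1 h2 => cases h2; exact ⟨_, hs.subset (List.mem_singleton_self _), h1⟩

lemma wle_single {a b : P} (h : a ≤ b) : wle [a] [b] :=
  wle_of_forall₂ (List.Forall₂.cons h List.Forall₂.nil)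

lemma forall₂_split {l x y : List P} (h : F l (x ++ y)) :
    ∃ l₁ l₂, l = l₁ ++ l₂ ∧ F l₁ x ∧ F l₂ y :=
  ⟨l.take x.length, l.drop x.length, (List.take_append_drop _ l).symm,
    List.forall₂_take_append l x y h, List.forall₂_drop_append l x y h⟩

lemma forall₂_cosplit {x y l : List P} (h : F (x ++ y) l) :
    ∃ l₁ l₂, l = l₁ ++ l₂ ∧ F x l₁ ∧ F y l₂ := by
  have h' := h.flip
  have h1 := List.forall₂_take_append l x y h'
  have h2 := List.forall₂_drop_append l x y h'
  exact ⟨l.take x.length, l.drop x.length, (List.take_append_drop _ l).symm, h1.flip, h2.flip⟩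

lemma forall₂_append_split {p q x y : List P} (h : F (p ++ q) (x ++ y))
    (hl : p.length = x.length) : F p x ∧ F q y := by
  obtain ⟨l₁, l₂, he, h1, h2⟩ := forall₂_cosplit h
  have hl1 : p.length = l₁.length := h1.length_eq
  obtain ⟨rfl, rfl⟩ := List.append_inj he.symm (by omega)
  exact ⟨h1, h2⟩

end Basics

section Main
variable {P : Type*} [PartialOrder P]

local notation "F" => List.Forall₂ (α := P) (β := P) (· ≤ ·)

def PA (v₁ v₂ : List P) (a : P) (v : List P) : Prop :=
  ∃ y, v = y ++ a :: v₂ ∧ wlt v₁ y ∧ wle y (v₁ ++ [a])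

def PB (v₁ v₂ : List P) (a : P) (v : List P) : Prop :=
  ∃ z, v = v₁ ++ a :: z ∧ wlt v₂ z ∧ wle z (a :: v₂)

lemma crossAB {v₁ v₂ : List P} {a : P} {x x' : List P}
    (hA : PA v₁ v₂ a x) (hB : PB v₁ v₂ a x')
    (hx' : x' ≠ v₁ ++ a :: a :: v₂) : ¬ wle x x' := by
  obtain ⟨y, rfl, hy₁, hy₂⟩ := hA
  obtain ⟨z, rfl, hz₁, hz₂⟩ := hB
  intro h
  obtain ⟨q₁, q₂, he, hq₁, hq₂⟩ := wle_cosplit h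
  obtain ⟨r, q₃, rfl, hr, hq₃⟩ := wle_cosplit (x₁ := [a]) (x₂ := v₂) hq₂
  have hly : v₁.length ≤ y.length := wle_length hy₁.1
  have hly2 : y.length ≤ v₁.length + 1 := by
    have := wle_length hy₂; simpa using this
  have hlz : v₂.length ≤ z.length := wle_length hz₁.1
  have hlz2 : z.length ≤ v₂.length + 1 := by
    have := wle_length hz₂; simpa using this
  have hlq₁ : y.length ≤ q₁.length := wle_length hq₁
  have hlr : 1 ≤ r.length := by have := wle_length hr; simpa using this
  have hlq₃ : v₂.length ≤ q₃.length := wle_length hq₃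
  have htot := congrArg List.length he
  simp only [List.length_append, List.length_cons] at htot
  rcases Nat.lt_or_ge q₁.length (v₁.length + 1) with hq | hq
  · obtain ⟨rfl, -⟩ := List.append_inj he (by omega)
    exact hy₁.2 hq₁
  · have he' : (v₁ ++ [a]) ++ z = q₁ ++ (r ++ q₃) := by simpa using he
    obtain ⟨hq₁e, hze⟩ := List.append_inj he'
      (by simp only [List.length_append, List.length_cons]; simp; omega)
    obtain ⟨r₀, rfl⟩ := List.length_eq_one_iff.1 (show r.length = 1 by omega)
    obtain ⟨b, hb, hab⟩ := wle_singleton_left hr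
    simp only [List.mem_singleton] at hb; subst hb
    have hFz : F z (a :: v₂) := forall₂_of_wle hz₂ (by simp only [List.length_cons]; omega)
    rw [hze, List.singleton_append] at hFz
    cases hFz with
    | cons hr₀a hFq₃ =>
      have hq₃e : q₃ = v₂ := forall₂_antisymm hFq₃ (forall₂_of_wle hq₃ (by omega))
      apply hx'
      rw [hze, hq₃e, le_antisymm hr₀a hab]
      simp

lemma crossBA {v₁ v₂ : List P} {a : P} {x x' : List P}
    (hA : PA v₁ v₂ a x) (hB : PB v₁ v₂ a x')
    (hx : x ≠ v₁ ++ a :: a :: v₂) : ¬ wle x' x := by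
  obtain ⟨y, rfl, hy₁, hy₂⟩ := hA
  obtain ⟨z, rfl, hz₁, hz₂⟩ := hB
  intro h
  obtain ⟨q₁, q₂, he, hq₁, hq₂⟩ := wle_cosplit h
  obtain ⟨r, q₃, rfl, hr, hq₃⟩ := wle_cosplit (x₁ := [a]) (x₂ := z) hq₂
  have hly : v₁.length ≤ y.length := wle_length hy₁.1
  have hly2 : y.length ≤ v₁.length + 1 := by
    have := wle_length hy₂; simpa using this
  have hlz : v₂.length ≤ z.length := wle_length hz₁.1
  have hlq₁ : v₁.length ≤ q₁.length := wle_length hq₁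
  have hlr : 1 ≤ r.length := by have := wle_length hr; simpa using this
  have hlq₃ : z.length ≤ q₃.length := wle_length hq₃
  have htot := congrArg List.length he
  simp only [List.length_append, List.length_cons] at htot
  rcases Nat.lt_or_ge q₃.length (v₂.length + 1) with hq | hq
  · have he' : (y ++ [a]) ++ v₂ = (q₁ ++ r) ++ q₃ := by
      rw [List.append_assoc, List.append_assoc]; simpa using he
    obtain ⟨-, rfl⟩ := List.append_inj' he' (by omega)
    exact hz₁.2 hq₃
  · have hFy : F y (v₁ ++ [a]) := forall₂_of_wle hy₂
      (by simp only [List.length_append, List.length_cons, List.length_nil]; omega)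
    have he' : y ++ (a :: v₂) = (q₁ ++ r) ++ q₃ := by
      rw [List.append_assoc]; exact he
    obtain ⟨hye, hq₃e⟩ := List.append_inj he'
      (by simp only [List.length_append]; omega)
    obtain ⟨r₀, rfl⟩ := List.length_eq_one_iff.1 (show r.length = 1 by omega)
    obtain ⟨b, hb, hab⟩ := wle_singleton_left hr
    simp only [List.mem_singleton] at hb; subst hb
    rw [hye] at hFy
    obtain ⟨hFq₁, hFr⟩ := forall₂_append_split hFy (by omega)
    cases hFr with
    | cons hr₀a h0 =>
      have hq₁e : q₁ = v₁ := forall₂_antisymm hFq₁ (forall₂_of_wle hq₁ (by omega))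
      apply hx
      rw [hye, hq₁e, le_antisymm hr₀a hab]
      simp

end Main

section Cover
variable {P : Type*} [PartialOrder P]

local notation "F" => List.Forall₂ (α := P) (β := P) (· ≤ ·)

lemma cover {v₁ v₂ : List P} {a : P} {v : List P}
    (hv₁ : wlt (v₁ ++ a :: v₂) v) (hv₂ : wlt v (v₁ ++ a :: a :: v₂)) :
    PA v₁ v₂ a v ∨ PB v₁ v₂ a v := by
  have hl1 : (v₁ ++ a :: v₂).length ≤ v.length := wle_length hv₁.1
  have hl2 : v.length ≤ (v₁ ++ a :: a :: v₂).length := wle_length hv₂.1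
  simp only [List.length_append, List.length_cons] at hl1 hl2
  rcases Nat.lt_or_ge v.length (v₁.length + v₂.length + 2) with hc | hc
  · -- short case : v.length = n₁ + n₂ + 1, v pointwise ≥ u
    have hF : F (v₁ ++ a :: v₂) v := forall₂_of_wle hv₁.1
      (by simp only [List.length_append, List.length_cons]; omega)
    obtain ⟨y, d, rfl, hFy, hFd⟩ := forall₂_cosplit hF
    obtain ⟨m, z, ham, hFz, rfl⟩ := List.forall₂_cons_left_iff.1 hFd
    have hyl : v₁.length = y.length := hFy.length_eq
    have hzl : v₂.length = z.length := hFz.length_eq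
    obtain ⟨p₁, p₂₃₄, hve, hp₁, hp₂₃₄⟩ := wle_split hv₂.1
    obtain ⟨p₂, p₃₄, rfl, hp₂, hp₃₄⟩ := wle_split (γ := [a]) (δ := a :: v₂) hp₂₃₄
    obtain ⟨p₃, p₄, rfl, hp₃, hp₄⟩ := wle_split (γ := [a]) (δ := v₂) hp₃₄
    have hp₁l : p₁.length ≤ v₁.length := wle_length hp₁
    have hp₄l : p₄.length ≤ v₂.length := wle_length hp₄
    have htot := congrArg List.length hve
    simp only [List.length_append, List.length_cons] at htot
    rcases wle_singleton_right hp₂ with rfl | ⟨c, hca, rfl⟩ <;>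
      rcases wle_singleton_right hp₃ with rfl | ⟨d', hda, rfl⟩
    · -- both empty: length contradiction
      exfalso; simp at htot; omega
    · -- p₂ = [], p₃ = [d'] : v = u, contradiction
      exfalso
      have he : y ++ m :: z = p₁ ++ (d' :: p₄) := by simpa using hve
      obtain ⟨hye, hrest⟩ := List.append_inj he (by simp at htot; omega)
      injection hrest with hmd hze
      apply hv₁.2
      have hyv : y = v₁ :=
        (forall₂_antisymm hFy (forall₂_of_wle (show wle y v₁ by rw [hye]; exact hp₁)
          (by omega))).symm
      have hma : m = a := le_antisymm (show m ≤ a by rw [hmd]; exact hda) ham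
      have hzv : z = v₂ :=
        forall₂_antisymm (forall₂_of_wle (show wle z v₂ by rw [hze]; exact hp₄)
          (by omega)) hFz
      rw [hyv, hma, hzv]; exact wle_refl _
    · -- p₂ = [c], p₃ = [] : v = u, contradiction
      exfalso
      have he : y ++ m :: z = p₁ ++ (c :: p₄) := by simpa using hve
      obtain ⟨hye, hrest⟩ := List.append_inj he (by simp at htot; omega)
      injection hrest with hmd hze
      apply hv₁.2
      have hyv : y = v₁ :=
        (forall₂_antisymm hFy (forall₂_of_wle (show wle y v₁ by rw [hye]; exact hp₁)
          (by omega))).symm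
      have hma : m = a := le_antisymm (show m ≤ a by rw [hmd]; exact hca) ham
      have hzv : z = v₂ :=
        forall₂_antisymm (forall₂_of_wle (show wle z v₂ by rw [hze]; exact hp₄)
          (by omega)) hFz
      rw [hyv, hma, hzv]; exact wle_refl _
    · -- p₂ = [c], p₃ = [d']
      have he : y ++ m :: z = p₁ ++ (c :: d' :: p₄) := by simpa using hve
      have htot' : y.length + z.length + 1 = p₁.length + p₄.length + 2 := by
        simp at htot; omega
      rcases Nat.lt_or_ge p₁.length v₁.length with hp | hp
      · -- p₁.length + 1 = v₁.length : change before the a, PA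
        have he' : y ++ (m :: z) = (p₁ ++ [c]) ++ (d' :: p₄) := by
          rw [List.append_assoc]; simpa using he
        obtain ⟨hye, hrest⟩ := List.append_inj he'
          (by simp only [List.length_append, List.length_cons, List.length_nil]; omega)
        injection hrest with hmd hze
        have hma : m = a := le_antisymm (show m ≤ a by rw [hmd]; exact hda) ham
        have hzv : z = v₂ :=
          forall₂_antisymm (forall₂_of_wle (show wle z v₂ by rw [hze]; exact hp₄)
            (by omega)) hFz
        refine Or.inl ⟨y, by rw [hma, hzv], ⟨wle_of_forall₂ hFy, ?_⟩, ?_⟩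
        · intro hcon
          have hyv : y = v₁ := forall₂_antisymm (forall₂_of_wle hcon (by omega)) hFy
          exact hv₁.2 (by rw [hyv, hma, hzv]; exact wle_refl _)
        · rw [hye]; exact wle_append hp₁ (wle_single hca)
      · -- p₁.length = v₁.length : change after the a, PB
        obtain ⟨hye, hrest⟩ := List.append_inj he (by omega)
        injection hrest with hmc hze
        have hyv : y = v₁ :=
          (forall₂_antisymm hFy (forall₂_of_wle (show wle y v₁ by rw [hye]; exact hp₁)
            (by omega))).symm
        have hma : m = a := le_antisymm (show m ≤ a by rw [hmc]; exact hca) ham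
        refine Or.inr ⟨d' :: p₄, by rw [hyv, hma, hze], ⟨?_, ?_⟩, ?_⟩
        · rw [← hze]; exact wle_of_forall₂ hFz
        · intro hcon
          have hzel := congrArg List.length hze
          simp only [List.length_cons] at hzel
          have hcf : F (d' :: p₄) v₂ := forall₂_of_wle hcon (by simp; omega)
          have hzv : z = v₂ := by
            rw [hze] at hFz ⊢; exact forall₂_antisymm hcf hFz |>.symm ▸ rfl
          exact hv₁.2 (by rw [hyv, hma, hzv]; exact wle_refl _)
        · have h1 := wle_append (wle_single hda) hp₄
          simpa using h1
  · -- long case : v.length = n₁ + n₂ + 2, v pointwise ≤ w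
    have hF : F v (v₁ ++ a :: a :: v₂) := forall₂_of_wle hv₂.1
      (by simp only [List.length_append, List.length_cons]; omega)
    obtain ⟨y, d, rfl, hFy, hFd⟩ := forall₂_split hF
    obtain ⟨s, d₁, hsa, hFd₁, rfl⟩ := List.forall₂_cons_right_iff.1 hFd
    obtain ⟨t, z, hta, hFz, rfl⟩ := List.forall₂_cons_right_iff.1 hFd₁
    have hyl : y.length = v₁.length := hFy.length_eq
    have hzl : z.length = v₂.length := hFz.length_eq
    obtain ⟨q₁, q₂, he, hq₁, hq₂⟩ := wle_cosplit hv₁.1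
    obtain ⟨r, q₃, rfl, hr, hq₃⟩ := wle_cosplit (x₁ := [a]) (x₂ := v₂) hq₂
    have hlq₁ : v₁.length ≤ q₁.length := wle_length hq₁
    have hlr : 1 ≤ r.length := by have := wle_length hr; simpa using this
    have hlq₃ : v₂.length ≤ q₃.length := wle_length hq₃
    have htot := congrArg List.length he
    simp only [List.length_append, List.length_cons] at htot
    rcases Nat.lt_or_ge q₁.length (v₁.length + 1) with hq | hq
    · -- q₁.length = n₁, so y = q₁ and wle v₁ y, hence y = v₁
      obtain ⟨hye, hrest⟩ := List.append_inj he (by omega)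
      have hyv : y = v₁ :=
        forall₂_antisymm hFy (forall₂_of_wle (show wle v₁ y by rw [hye]; exact hq₁)
          (by omega))
      rcases Nat.lt_or_ge r.length 2 with hr2 | hr2
      · -- r = [r₀], q₃ = t :: z : PB
        obtain ⟨r₀, rfl⟩ := List.length_eq_one_iff.1 (show r.length = 1 by omega)
        obtain ⟨b, hb, hab⟩ := wle_singleton_left hr
        simp only [List.mem_singleton] at hb; subst hb
        rw [List.singleton_append] at hrest
        injection hrest with hs hq₃e
        have hsa' : s = a := le_antisymm hsa (by rw [hs]; exact hab)
        refine Or.inr ⟨t :: z, by rw [hyv, hsa'], ⟨?_, ?_⟩, ?_⟩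
        · rw [hq₃e]; exact hq₃
        · intro hcon
          have := wle_length hcon; simp only [List.length_cons] at this; omega
        · exact wle_of_forall₂ (List.Forall₂.cons hta hFz)
      · -- r = [r₀, r₁] : s and t both cover the two a's region
        obtain ⟨r₀, r₁, rfl⟩ := List.length_eq_two.1 (show r.length = 2 by omega)
        have hq₃l : q₃.length = v₂.length := by omega
        simp only [List.cons_append, List.nil_append] at hrest
        injection hrest with hs hrest'
        injection hrest' with ht hq₃e
        have hzv : z = v₂ :=
          forall₂_antisymm hFz (forall₂_of_wle (show wle v₂ z by rw [hq₃e]; exact hq₃)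
            (by omega))
        obtain ⟨b, hb, hab⟩ := wle_singleton_left hr
        simp only [List.mem_cons, List.mem_singleton, List.not_mem_nil, or_false] at hb
        rcases hb with rfl | rfl
        · -- a ≤ r₀ = s : s = a, PB with t :: v₂
          have hsa' : s = a := le_antisymm hsa (by rw [hs]; exact hab)
          refine Or.inr ⟨t :: v₂, by rw [hyv, hsa', hzv], ⟨?_, ?_⟩, ?_⟩
          · exact wle_cons_right t (wle_refl v₂)
          · intro hcon
            have := wle_length hcon; simp only [List.length_cons] at this; omega
          · exact wle_of_forall₂ (List.Forall₂.cons hta (List.forall₂_refl v₂))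
        · -- a ≤ r₁ = t : t = a, PA with v₁ ++ [s]
          have hta' : t = a := le_antisymm hta (by rw [ht]; exact hab)
          refine Or.inl ⟨v₁ ++ [s], ?_, ⟨?_, ?_⟩, ?_⟩
          · rw [hyv, hta', hzv]; simp
          · have h1 := wle_append (wle_refl v₁) (show wle [] [s] from List.SublistForall₂.nil)
            simpa using h1
          · intro hcon
            have := wle_length hcon
            simp only [List.length_append, List.length_cons, List.length_nil] at this; omega
          · exact wle_append (wle_refl v₁) (wle_single hsa)
    · -- q₁.length = n₁ + 1 : q₁ = y ++ [s], PA
      have he' : (y ++ [s]) ++ (t :: z) = q₁ ++ (r ++ q₃) := by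
        rw [List.append_assoc]; simpa using he
      obtain ⟨hq₁e, hrest⟩ := List.append_inj he'
        (by simp only [List.length_append, List.length_cons, List.length_nil]; omega)
      obtain ⟨r₀, rfl⟩ := List.length_eq_one_iff.1 (show r.length = 1 by omega)
      rw [List.singleton_append] at hrest
      injection hrest with ht hq₃e
      obtain ⟨b, hb, hab⟩ := wle_singleton_left hr
      simp only [List.mem_singleton] at hb; subst hb
      have hta' : t = a := le_antisymm hta (by rw [ht]; exact hab)
      have hzv : z = v₂ :=
        forall₂_antisymm hFz (forall₂_of_wle (show wle v₂ z by rw [hq₃e]; exact hq₃)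
          (by omega))
      refine Or.inl ⟨y ++ [s], by rw [hta', hzv]; simp, ⟨?_, ?_⟩, ?_⟩
      · rw [hq₁e]; exact hq₁
      · intro hcon
        have := wle_length hcon
        simp only [List.length_append, List.length_cons, List.length_nil] at this; omega
      · exact wle_of_forall₂ (List.rel_append hFy (List.Forall₂.cons hsa List.Forall₂.nil))

end Cover

/-- Let `P` be a rooted forest and `u, w ∈ P*` with `rk w − rk u ≥ 3`. If
`u = v₁ a v₂` and `w = v₁ a a v₂` for some letter `a`, then the open interval
`(u,w)` in generalized subword order is disconnected. -/
theorem word_interval_disconnected_of_doubled_letter {P : Type*} [PartialOrder P]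
    (rk : P → ℕ)
    (hforest : ∀ a : P, ¬ IsMin a → ∃! b : P, b ⋖ a)
    (hrkmin : ∀ a : P, IsMin a → rk a = 1)
    (hrkcov : ∀ a b : P, a ⋖ b → rk b = rk a + 1)
    (u w : List P) (hr : wrank rk u + 3 ≤ wrank rk w)
    (v₁ v₂ : List P) (a : P)
    (hu : u = v₁ ++ a :: v₂) (hw : w = v₁ ++ a :: a :: v₂) :
    GDisconn wle {v : List P | wlt u v ∧ wlt v w} := by
  subst hu hw
  have hra : 3 ≤ rk a := by
    simp only [wrank, List.map_append, List.map_cons, List.sum_append, List.sum_cons] at hr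
    omega
  have hnm : ¬ IsMin a := fun h => by have := hrkmin a h; omega
  obtain ⟨b, hb, -⟩ := hforest a hnm
  have hba : b ≤ a := hb.lt.le
  have hbne : b ≠ a := hb.lt.ne
  refine ⟨{v | (wlt (v₁ ++ a :: v₂) v ∧ wlt v (v₁ ++ a :: a :: v₂)) ∧ PA v₁ v₂ a v},
          {v | (wlt (v₁ ++ a :: v₂) v ∧ wlt v (v₁ ++ a :: a :: v₂)) ∧ PB v₁ v₂ a v},
          ?_, ?_, ?_, ?_⟩
  · ext v
    simp only [Set.mem_union, Set.mem_setOf_eq]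
    constructor
    · rintro (⟨h, -⟩ | ⟨h, -⟩) <;> exact h
    · intro h
      rcases cover h.1 h.2 with hp | hp
      · exact Or.inl ⟨h, hp⟩
      · exact Or.inr ⟨h, hp⟩
  · -- A nonempty : v₁ ++ b :: a :: v₂
    refine ⟨v₁ ++ b :: a :: v₂, ⟨⟨?_, ?_⟩, ⟨?_, ?_⟩⟩, ?_⟩
    · exact wle_append (wle_refl v₁) (wle_cons_right b (wle_refl (a :: v₂)))
    · intro hcon; have := wle_length hcon
      simp only [List.length_append, List.length_cons] at this; omega
    · exact wle_append (wle_refl v₁)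
        (wle_of_forall₂ (List.Forall₂.cons hba (List.forall₂_refl _)))
    · intro hcon
      have hFc := forall₂_of_wle hcon (by simp)
      obtain ⟨-, h2⟩ := forall₂_append_split hFc rfl
      cases h2 with | cons hab2 _ => exact hbne (le_antisymm hba hab2)
    · refine ⟨v₁ ++ [b], by simp, ⟨?_, ?_⟩, ?_⟩
      · have h1 := wle_append (wle_refl v₁) (show wle [] [b] from List.SublistForall₂.nil)
        simpa using h1
      · intro hcon; have := wle_length hcon
        simp only [List.length_append, List.length_cons, List.length_nil] at this; omega
      · exact wle_append (wle_refl v₁) (wle_single hba)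
  · -- B nonempty : v₁ ++ a :: b :: v₂
    refine ⟨v₁ ++ a :: b :: v₂, ⟨⟨?_, ?_⟩, ⟨?_, ?_⟩⟩, ?_⟩
    · exact wle_append (wle_refl v₁)
        (List.SublistForall₂.cons (le_refl a) (wle_cons_right b (wle_refl v₂)))
    · intro hcon; have := wle_length hcon
      simp only [List.length_append, List.length_cons] at this; omega
    · exact wle_append (wle_refl v₁)
        (wle_of_forall₂ (List.Forall₂.cons (le_refl a)
          (List.Forall₂.cons hba (List.forall₂_refl _))))
    · intro hcon
      have hFc := forall₂_of_wle hcon (by simp)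
      obtain ⟨-, h2⟩ := forall₂_append_split hFc rfl
      cases h2 with
      | cons _ h3 =>
        cases h3 with | cons hab2 _ => exact hbne (le_antisymm hba hab2)
    · refine ⟨b :: v₂, rfl, ⟨wle_cons_right b (wle_refl v₂), ?_⟩,
        wle_of_forall₂ (List.Forall₂.cons hba (List.forall₂_refl _))⟩
      intro hcon; have := wle_length hcon
      simp only [List.length_cons] at this; omega
  · rintro x ⟨⟨-, hxw⟩, hxA⟩ y ⟨⟨-, hyw⟩, hyB⟩
    have hxne : x ≠ v₁ ++ a :: a :: v₂ := fun h => hxw.2 (by rw [h]; exact wle_refl _)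
    have hyne : y ≠ v₁ ++ a :: a :: v₂ := fun h => hyw.2 (by rw [h]; exact wle_refl _)
    exact ⟨crossAB hxA hyB hyne, crossBA hxA hyB hxne⟩
end
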